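/- Let X and Y be independent rate-1 exponential random variables, let α ≥ 0 and r₁, r₂ ∈ (0,1]. Then lim_{ρ→∞} log P[ {1 + ρX < ρ^{r₁}} ∪ {1 + ρ^α Y < ρ^{r₂}} ∪ {1 + ρX + ρ^α Y < ρ^{r₁+r₂}} ] / log ρ = −min{1 − r₁, (α − r₂)^+, (1 − r₁ − r₂)^+ + (α − r₁ − r₂)^+}. (Exponent of the joint-decoding (multiple-access-type) outage event at a single receiver that sees the intended signal at power SNR and the interfering signal at power SNR^α; the corresponding exponents govern the multiuser branch d_MU of the DMT in Theorem 2.) -/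

import Mathlib

open MeasureTheory ProbabilityTheory Filter Real Set Topology

/-!
For an exponential variable, `P[Z < t] = 1 - e^{-t}` lies between `(1 - e⁻¹) min(t, 1)` and
`min(t, 1)`. For `T ≥ 2` the event `1 + sZ < T` is squeezed between `Z < T/(2s)` and `Z < T/s`,
and by independence the sum event `1 + sX + tY < T` between `{X < T/(4s)} ∩ {Y < T/(4t)}` and
`{X < T/s} ∩ {Y < T/t}` (as `X, Y ≥ 0` a.s.). So the outage probability is, up to constant
factors, the largest of `min(T₁/s, 1)`, `min(T₂/t, 1)` and `min(T₃/s, 1) min(T₃/t, 1)`; with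
`s = ρ`, `t = ρ^α`, `Tᵢ = ρ^{rᵢ}` each of these is `ρ^{-e}` for the corresponding exponent `e`,
and constants disappear after dividing the logarithm by `log ρ`.
-/

lemma one_sub_exp_neg_le_min (t : ℝ) : 1 - exp (-t) ≤ min t 1 :=
  le_min (by linarith [add_one_le_exp (-t)]) (by linarith [exp_pos (-t)])

lemma one_sub_exp_neg_one_pos : 0 < 1 - exp (-1) :=
  sub_pos.2 (exp_lt_one_iff.2 (by norm_num))

lemma mul_min_le_one_sub_exp_neg {t : ℝ} (ht : 0 ≤ t) :
    (1 - exp (-1)) * min t 1 ≤ 1 - exp (-t) := by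
  rcases le_total t 1 with h | h
  · have hconv := convexOn_exp.2 (mem_univ 0) (mem_univ (-1)) (sub_nonneg.2 h) ht
      (sub_add_cancel 1 t)
    simp only [smul_eq_mul, mul_zero, zero_add, mul_neg, mul_one, exp_zero] at hconv
    rw [min_eq_left h]
    linarith
  · rw [min_eq_right h]
    linarith [exp_le_exp.2 (neg_le_neg h)]

lemma min_rpow_div_rpow_one {ρ : ℝ} (hρ : 1 ≤ ρ) (r β : ℝ) :
    min (ρ ^ r / ρ ^ β) 1 = ρ ^ (-max (β - r) 0) := by
  rw [← rpow_sub (by linarith)]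
  rcases le_total (r - β) 0 with h | h
  · rw [max_eq_left (by linarith), neg_sub, min_eq_left (rpow_le_one_of_one_le_of_nonpos hρ h)]
  · rw [max_eq_right (by linarith), neg_zero, rpow_zero, min_eq_right (one_le_rpow hρ h)]

lemma rpow_neg_min {ρ : ℝ} (hρ : 1 ≤ ρ) (a b : ℝ) :
    ρ ^ (-min a b) = max (ρ ^ (-a)) (ρ ^ (-b)) :=
  Antitone.map_min (f := fun x => ρ ^ (-x)) fun _ _ h =>
    rpow_le_rpow_of_exponent_le hρ (neg_le_neg h)

lemma tendsto_log_mul_rpow_div_log {c : ℝ} (hc : 0 < c) (e : ℝ) :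
    Tendsto (fun ρ => log (c * ρ ^ e) / log ρ) atTop (𝓝 e) := by
  have hlim : Tendsto (fun ρ => log c / log ρ + e) atTop (𝓝 e) := by
    simpa using (tendsto_const_nhds.div_atTop tendsto_log_atTop).add_const e
  refine hlim.congr' ?_
  filter_upwards [eventually_gt_atTop 1] with ρ hρ
  have hlog : log ρ ≠ 0 := (log_pos hρ).ne'
  rw [log_mul hc.ne' (rpow_pos_of_pos (by linarith) e).ne', log_rpow (by linarith)]
  field_simp

lemma tendsto_log_div_log_of_le_of_le {f : ℝ → ℝ} {a b e : ℝ} (ha : 0 < a) (hb : 0 < b)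
    (hf : ∀ᶠ ρ in atTop, a * ρ ^ e ≤ f ρ ∧ f ρ ≤ b * ρ ^ e) :
    Tendsto (fun ρ => log (f ρ) / log ρ) atTop (𝓝 e) := by
  refine tendsto_of_tendsto_of_tendsto_of_le_of_le' (tendsto_log_mul_rpow_div_log ha e)
    (tendsto_log_mul_rpow_div_log hb e) ?_ ?_
  all_goals
    filter_upwards [hf, eventually_gt_atTop 1] with ρ ⟨hlow, hup⟩ hρ
    have hlow_pos : 0 < a * ρ ^ e := mul_pos ha (rpow_pos_of_pos (by linarith) e)
    refine div_le_div_of_nonneg_right ?_ (log_nonneg hρ.le)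
  · exact log_le_log hlow_pos hlow
  · exact log_le_log (hlow_pos.trans_le hlow) hup

lemma expMeasure_Iio {r : ℝ} (hr : 0 < r) (t : ℝ) :
    expMeasure r (Iio t) = ENNReal.ofReal (if 0 ≤ t then 1 - exp (-(r * t)) else 0) := by
  rw [expMeasure, gammaMeasure, withDensity_apply _ measurableSet_Iio,
    setLIntegral_congr Iio_ae_eq_Iic]
  exact lintegral_exponentialPDF_eq_antiDeriv hr t

section ExponentialLaw

variable {Ω : Type*} [MeasurableSpace Ω] {P : Measure Ω} {Z : Ω → ℝ}

lemma measure_lt_of_map_eq_expMeasure (hZm : Measurable Z) (hZ : P.map Z = expMeasure 1)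
    (t : ℝ) : P {ω | Z ω < t} = ENNReal.ofReal (if 0 ≤ t then 1 - exp (-t) else 0) := by
  change P (Z ⁻¹' Iio t) = _
  rw [← Measure.map_apply hZm measurableSet_Iio, hZ, expMeasure_Iio one_pos, one_mul]

lemma ae_nonneg_of_map_eq_expMeasure (hZm : Measurable Z) (hZ : P.map Z = expMeasure 1) :
    ∀ᵐ ω ∂P, 0 ≤ Z ω := by
  simp only [ae_iff, not_le, measure_lt_of_map_eq_expMeasure hZm hZ, le_refl, if_true, neg_zero,
    exp_zero, sub_self, ENNReal.ofReal_zero]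

lemma measureReal_lt_of_map_eq_expMeasure (hZm : Measurable Z) (hZ : P.map Z = expMeasure 1)
    {t : ℝ} (ht : 0 ≤ t) : P.real {ω | Z ω < t} = 1 - exp (-t) := by
  rw [measureReal_def, measure_lt_of_map_eq_expMeasure hZm hZ, if_pos ht,
    ENNReal.toReal_ofReal (by linarith [exp_le_one_iff.2 (neg_nonpos.2 ht)])]

lemma measureReal_lt_le_min (hZm : Measurable Z) (hZ : P.map Z = expMeasure 1) {t : ℝ}
    (ht : 0 ≤ t) : P.real {ω | Z ω < t} ≤ min t 1 :=
  (measureReal_lt_of_map_eq_expMeasure hZm hZ ht).trans_le (one_sub_exp_neg_le_min t)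

lemma div_mul_min_le_measureReal_lt_div (hZm : Measurable Z) (hZ : P.map Z = expMeasure 1)
    {t k : ℝ} (ht : 0 ≤ t) (hk : 1 ≤ k) :
    (1 - exp (-1)) / k * min t 1 ≤ P.real {ω | Z ω < t / k} := by
  rw [measureReal_lt_of_map_eq_expMeasure hZm hZ (div_nonneg ht (by linarith))]
  have hmin : min t 1 / k ≤ min (t / k) 1 := by
    rw [← min_div_div_right (by linarith)]
    exact min_le_min_left _ (div_le_one_of_le₀ hk (by linarith))
  calc (1 - exp (-1)) / k * min t 1 = (1 - exp (-1)) * (min t 1 / k) := by ring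
    _ ≤ (1 - exp (-1)) * min (t / k) 1 := by gcongr; exact one_sub_exp_neg_one_pos.le
    _ ≤ 1 - exp (-(t / k)) := mul_min_le_one_sub_exp_neg (div_nonneg ht (by linarith))

end ExponentialLaw

lemma measureReal_lt_inter_lt {Ω : Type*} [MeasurableSpace Ω] {P : Measure Ω} {X Y : Ω → ℝ}
    (hindep : IndepFun X Y P) (u v : ℝ) :
    P.real ({ω | X ω < u} ∩ {ω | Y ω < v}) = P.real {ω | X ω < u} * P.real {ω | Y ω < v} := by
  simp only [measureReal_def, ← ENNReal.toReal_mul]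
  exact congrArg ENNReal.toReal
    (hindep.measure_inter_preimage_eq_mul _ _ measurableSet_Iio measurableSet_Iio)

section JointOutage

variable {Ω : Type*} [MeasurableSpace Ω] {P : Measure Ω} [IsFiniteMeasure P] {X Y Z : Ω → ℝ}
  {s t T : ℝ}

lemma measureReal_one_add_mul_lt_le (hZm : Measurable Z) (hZ : P.map Z = expMeasure 1)
    (hs : 0 < s) (hT : 0 ≤ T) : P.real {ω | 1 + s * Z ω < T} ≤ min (T / s) 1 := by
  refine (measureReal_mono fun ω (hω : 1 + s * Z ω < T) => ?_).trans
    (measureReal_lt_le_min hZm hZ (div_nonneg hT hs.le))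
  change Z ω < T / s
  rw [lt_div_iff₀' hs]
  linarith

lemma le_measureReal_one_add_mul_lt (hZm : Measurable Z) (hZ : P.map Z = expMeasure 1)
    (hs : 0 < s) (hT : 2 ≤ T) :
    (1 - exp (-1)) / 2 * min (T / s) 1 ≤ P.real {ω | 1 + s * Z ω < T} := by
  refine (div_mul_min_le_measureReal_lt_div hZm hZ (by positivity) one_le_two).trans
    (measureReal_mono fun ω (hω : Z ω < T / s / 2) => ?_)
  change 1 + s * Z ω < T
  rw [div_div, lt_div_iff₀' (by positivity)] at hω
  linarith

lemma measureReal_one_add_mul_add_mul_lt_le (hXm : Measurable X) (hX : P.map X = expMeasure 1)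
    (hYm : Measurable Y) (hY : P.map Y = expMeasure 1) (hindep : IndepFun X Y P)
    (hs : 0 < s) (ht : 0 < t) (hT : 0 ≤ T) :
    P.real {ω | 1 + s * X ω + t * Y ω < T} ≤ min (T / s) 1 * min (T / t) 1 := by
  have hsub : {ω | 1 + s * X ω + t * Y ω < T} ≤ᵐ[P]
      ({ω | X ω < T / s} ∩ {ω | Y ω < T / t} : Set Ω) := by
    filter_upwards [ae_nonneg_of_map_eq_expMeasure hXm hX,
      ae_nonneg_of_map_eq_expMeasure hYm hY] with ω hx hy (hω : 1 + s * X ω + t * Y ω < T)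
    change X ω < T / s ∧ Y ω < T / t
    rw [lt_div_iff₀' hs, lt_div_iff₀' ht]
    constructor <;> linarith [mul_nonneg hs.le hx, mul_nonneg ht.le hy]
  calc P.real {ω | 1 + s * X ω + t * Y ω < T}
      ≤ P.real ({ω | X ω < T / s} ∩ {ω | Y ω < T / t}) :=
        ENNReal.toReal_mono (measure_ne_top _ _) (measure_mono_ae hsub)
    _ = P.real {ω | X ω < T / s} * P.real {ω | Y ω < T / t} := measureReal_lt_inter_lt hindep _ _
    _ ≤ min (T / s) 1 * min (T / t) 1 :=
        mul_le_mul (measureReal_lt_le_min hXm hX (by positivity))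
          (measureReal_lt_le_min hYm hY (by positivity)) measureReal_nonneg (by positivity)

lemma le_measureReal_one_add_mul_add_mul_lt (hXm : Measurable X) (hX : P.map X = expMeasure 1)
    (hYm : Measurable Y) (hY : P.map Y = expMeasure 1) (hindep : IndepFun X Y P)
    (hs : 0 < s) (ht : 0 < t) (hT : 2 ≤ T) :
    ((1 - exp (-1)) / 4) ^ 2 * (min (T / s) 1 * min (T / t) 1) ≤
      P.real {ω | 1 + s * X ω + t * Y ω < T} := by
  have hsub : {ω | X ω < T / s / 4} ∩ {ω | Y ω < T / t / 4} ⊆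
      {ω | 1 + s * X ω + t * Y ω < T} := by
    rintro ω ⟨hx, hy⟩
    change X ω < T / s / 4 at hx
    change Y ω < T / t / 4 at hy
    rw [div_div, lt_div_iff₀' (by positivity)] at hx hy
    change 1 + s * X ω + t * Y ω < T
    linarith
  have hc : 0 ≤ (1 - exp (-1)) / 4 := div_nonneg one_sub_exp_neg_one_pos.le (by norm_num)
  calc ((1 - exp (-1)) / 4) ^ 2 * (min (T / s) 1 * min (T / t) 1)
      = ((1 - exp (-1)) / 4 * min (T / s) 1) * ((1 - exp (-1)) / 4 * min (T / t) 1) := by ring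
    _ ≤ P.real {ω | X ω < T / s / 4} * P.real {ω | Y ω < T / t / 4} :=
        mul_le_mul (div_mul_min_le_measureReal_lt_div hXm hX (by positivity) (by norm_num))
          (div_mul_min_le_measureReal_lt_div hYm hY (by positivity) (by norm_num))
          (mul_nonneg hc (by positivity)) measureReal_nonneg
    _ = P.real ({ω | X ω < T / s / 4} ∩ {ω | Y ω < T / t / 4}) :=
        (measureReal_lt_inter_lt hindep _ _).symm
    _ ≤ P.real {ω | 1 + s * X ω + t * Y ω < T} := measureReal_mono hsub

def jointOutage (X Y : Ω → ℝ) (s t T₁ T₂ T₃ : ℝ) : Set Ω :=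
  {ω | 1 + s * X ω < T₁} ∪ {ω | 1 + t * Y ω < T₂} ∪ {ω | 1 + s * X ω + t * Y ω < T₃}

noncomputable def jointOutageScale (s t T₁ T₂ T₃ : ℝ) : ℝ :=
  max (min (T₁ / s) 1) (max (min (T₂ / t) 1) (min (T₃ / s) 1 * min (T₃ / t) 1))

variable {T₁ T₂ T₃ : ℝ}

lemma measureReal_jointOutage_le (hXm : Measurable X) (hX : P.map X = expMeasure 1)
    (hYm : Measurable Y) (hY : P.map Y = expMeasure 1) (hindep : IndepFun X Y P)
    (hs : 0 < s) (ht : 0 < t) (hT₁ : 0 ≤ T₁) (hT₂ : 0 ≤ T₂) (hT₃ : 0 ≤ T₃) :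
    P.real (jointOutage X Y s t T₁ T₂ T₃) ≤ 3 * jointOutageScale s t T₁ T₂ T₃ := by
  calc P.real (jointOutage X Y s t T₁ T₂ T₃)
      ≤ P.real {ω | 1 + s * X ω < T₁} + P.real {ω | 1 + t * Y ω < T₂}
        + P.real {ω | 1 + s * X ω + t * Y ω < T₃} :=
        (measureReal_union_le _ _).trans (by gcongr; exact measureReal_union_le _ _)
    _ ≤ min (T₁ / s) 1 + min (T₂ / t) 1 + min (T₃ / s) 1 * min (T₃ / t) 1 := by
        gcongr
        · exact measureReal_one_add_mul_lt_le hXm hX hs hT₁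
        · exact measureReal_one_add_mul_lt_le hYm hY ht hT₂
        · exact measureReal_one_add_mul_add_mul_lt_le hXm hX hYm hY hindep hs ht hT₃
    _ ≤ 3 * jointOutageScale s t T₁ T₂ T₃ := by
        have h₁ : min (T₁ / s) 1 ≤ jointOutageScale s t T₁ T₂ T₃ := le_max_left _ _
        have h₂ : min (T₂ / t) 1 ≤ jointOutageScale s t T₁ T₂ T₃ :=
          (le_max_left _ _).trans (le_max_right _ _)
        have h₃ : min (T₃ / s) 1 * min (T₃ / t) 1 ≤ jointOutageScale s t T₁ T₂ T₃ :=
          (le_max_right _ _).trans (le_max_right _ _)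
        linarith

lemma le_measureReal_jointOutage (hXm : Measurable X) (hX : P.map X = expMeasure 1)
    (hYm : Measurable Y) (hY : P.map Y = expMeasure 1) (hindep : IndepFun X Y P)
    (hs : 0 < s) (ht : 0 < t) (hT₁ : 2 ≤ T₁) (hT₂ : 2 ≤ T₂) (hT₃ : 2 ≤ T₃) :
    ((1 - exp (-1)) / 4) ^ 2 * jointOutageScale s t T₁ T₂ T₃ ≤
      P.real (jointOutage X Y s t T₁ T₂ T₃) := by
  have hc := one_sub_exp_neg_one_pos
  have hκ : ((1 - exp (-1)) / 4) ^ 2 ≤ (1 - exp (-1)) / 2 := by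
    nlinarith [exp_pos (-1)]
  rw [jointOutageScale, mul_max_of_nonneg _ _ (by positivity),
    mul_max_of_nonneg _ _ (by positivity)]
  refine max_le ?_ (max_le ?_ ?_)
  · calc ((1 - exp (-1)) / 4) ^ 2 * min (T₁ / s) 1
        ≤ (1 - exp (-1)) / 2 * min (T₁ / s) 1 := by gcongr
      _ ≤ P.real {ω | 1 + s * X ω < T₁} := le_measureReal_one_add_mul_lt hXm hX hs hT₁
      _ ≤ _ := measureReal_mono (subset_union_left.trans subset_union_left)
  · calc ((1 - exp (-1)) / 4) ^ 2 * min (T₂ / t) 1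
        ≤ (1 - exp (-1)) / 2 * min (T₂ / t) 1 := by gcongr
      _ ≤ P.real {ω | 1 + t * Y ω < T₂} := le_measureReal_one_add_mul_lt hYm hY ht hT₂
      _ ≤ _ := measureReal_mono (subset_union_right.trans subset_union_left)
  · exact (le_measureReal_one_add_mul_add_mul_lt hXm hX hYm hY hindep hs ht hT₃).trans
      (measureReal_mono subset_union_right)

end JointOutage

lemma jointOutageScale_rpow {ρ α r₁ r₂ : ℝ} (hρ : 1 ≤ ρ) (hr₁ : r₁ ≤ 1) :
    jointOutageScale ρ (ρ ^ α) (ρ ^ r₁) (ρ ^ r₂) (ρ ^ (r₁ + r₂)) =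
      ρ ^ (-min (1 - r₁) (min (max (α - r₂) 0) (max (1 - r₁ - r₂) 0 + max (α - r₁ - r₂) 0))) := by
  have h := min_rpow_div_rpow_one hρ
  have h₁ : min (ρ ^ r₁ / ρ) 1 = ρ ^ (-(1 - r₁)) := by
    rw [← max_eq_left (sub_nonneg.2 hr₁), ← h, rpow_one]
  have h₁₂ : min (ρ ^ (r₁ + r₂) / ρ) 1 = ρ ^ (-max (1 - r₁ - r₂) 0) := by
    rw [sub_sub, ← h, rpow_one]
  rw [jointOutageScale, h₁, h, h₁₂, h, sub_sub α, ← rpow_add (by linarith), ← neg_add,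
    rpow_neg_min hρ, rpow_neg_min hρ]

theorem stmt_13_general {Ω : Type*} [MeasurableSpace Ω] (P : Measure Ω) [IsProbabilityMeasure P]
    (X Y : Ω → ℝ) (hXm : Measurable X) (hYm : Measurable Y)
    (hX : Measure.map X P = expMeasure 1) (hY : Measure.map Y P = expMeasure 1)
    (hindep : IndepFun X Y P)
    (α r₁ r₂ : ℝ)
    (hr₁0 : 0 < r₁) (hr₁1 : r₁ ≤ 1) (hr₂0 : 0 < r₂) :
    Tendsto (fun ρ : ℝ =>
        Real.log (P ({ω | 1 + ρ * X ω < ρ ^ r₁} ∪ {ω | 1 + ρ ^ α * Y ω < ρ ^ r₂}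
            ∪ {ω | 1 + ρ * X ω + ρ ^ α * Y ω < ρ ^ (r₁ + r₂)})).toReal / Real.log ρ)
      atTop
      (nhds (-min (1 - r₁)
        (min (max (α - r₂) 0) (max (1 - r₁ - r₂) 0 + max (α - r₁ - r₂) 0)))) := by
  have hκ : 0 < ((1 - exp (-1)) / 4) ^ 2 := by
    have := one_sub_exp_neg_one_pos
    positivity
  refine tendsto_log_div_log_of_le_of_le hκ three_pos ?_
  filter_upwards [eventually_ge_atTop 1, (tendsto_rpow_atTop hr₁0).eventually_ge_atTop 2,
    (tendsto_rpow_atTop hr₂0).eventually_ge_atTop 2,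
    (tendsto_rpow_atTop (add_pos hr₁0 hr₂0)).eventually_ge_atTop 2] with ρ hρ h₁ h₂ h₁₂
  have hρ0 : 0 < ρ := by linarith
  have hρα : 0 < ρ ^ α := rpow_pos_of_pos hρ0 α
  rw [← jointOutageScale_rpow hρ hr₁1]
  exact ⟨le_measureReal_jointOutage hXm hX hYm hY hindep hρ0 hρα h₁ h₂ h₁₂,
    measureReal_jointOutage_le hXm hX hYm hY hindep hρ0 hρα (by linarith) (by linarith)
      (by linarith)⟩

/-- Exponent of the joint-decoding (multiple-access-type) outage event at a single
receiver seeing the intended signal at power `ρ` and the interferer at power `ρ^α`. -/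
theorem stmt_13 {Ω : Type*} [MeasurableSpace Ω] (P : Measure Ω) [IsProbabilityMeasure P]
    (X Y : Ω → ℝ) (hXm : Measurable X) (hYm : Measurable Y)
    (hX : Measure.map X P = expMeasure 1) (hY : Measure.map Y P = expMeasure 1)
    (hindep : IndepFun X Y P)
    (α r₁ r₂ : ℝ) (hα : 0 ≤ α)
    (hr₁0 : 0 < r₁) (hr₁1 : r₁ ≤ 1) (hr₂0 : 0 < r₂) (hr₂1 : r₂ ≤ 1) :
    Tendsto (fun ρ : ℝ =>
        Real.log (P ({ω | 1 + ρ * X ω < ρ ^ r₁} ∪ {ω | 1 + ρ ^ α * Y ω < ρ ^ r₂}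
            ∪ {ω | 1 + ρ * X ω + ρ ^ α * Y ω < ρ ^ (r₁ + r₂)})).toReal / Real.log ρ)
      atTop
      (nhds (-min (1 - r₁)
        (min (max (α - r₂) 0) (max (1 - r₁ - r₂) 0 + max (α - r₁ - r₂) 0)))) :=
  stmt_13_general P X Y hXm hYm hX hY hindep α r₁ r₂ hr₁0 hr₁1 hr₂0
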